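/- Let A be a unital C*-algebra and let u, v ∈ A be extremal partial isometries with ‖u − v‖ < 2. Let I₁ be the closed two-sided ideal of A generated by 1 − uu* and let J₂ be the closed two-sided ideal of A generated by 1 − v*v. Then I₁·J₂ = {0} (i.e., xy = 0 for all x ∈ I₁ and y ∈ J₂); likewise I₂·J₁ = {0}, where I₂ is the closed ideal generated by 1 − vv* and J₁ is the closed ideal generated by 1 − u*u. -/

import Mathlib

/-- An element `u` of a C*-algebra is a partial isometry if `u * u* * u = u`. -/
def IsPartialIsometry {A : Type*} [CStarAlgebra A] (u : A) : Prop :=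
  u * star u * u = u

/-- A partial isometry in a unital C*-algebra is extremal if it is an extreme
point of the closed unit ball. -/
def IsExtremalPartialIsometry {A : Type*} [CStarAlgebra A] (u : A) : Prop :=
  IsPartialIsometry u ∧ u ∈ Set.extremePoints ℝ (Metric.closedBall (0 : A) 1)

/-- The closed two-sided ideal of `A` generated by an element `a`, as a set. -/
def closedIdealGen {A : Type*} [CStarAlgebra A] (a : A) : Set A :=
  closure (TwoSidedIdeal.span {a} : Set A)

/-!
By Kadison's criterion, an extremal partial isometry `u` satisfies `(1 - uu*) c (1 - u*u) = 0` for
every `c`: a nonzero such element, normalised to `z`, has `u*z = 0` and `z u*u = 0`, so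
`‖u ± z‖² = max ‖u‖² ‖z‖² ≤ 1` and `u` is the midpoint of `u + z` and `u - z`.

For `x = (1 - uu*) a (1 - v*v)` and `y = x*` this makes `u*u` and `vv*` act as the identity on `A y`,
while `v y = 0`. The orbit `z_k = (-v*u)^k y` is then an orthogonal chain, `z_j* z_k = δ_jk y*y`,
with `v z₀ = 0` and `v z_{k+1} = -u z_k`. Testing `u - v` on `z₀ + ⋯ + z_n` gives `(4n + 1)‖y‖² ≤ ‖u - v‖² (n + 1)‖y‖²`, so `y = 0` when
`‖u - v‖ < 2`. Finally, `p A q = 0` passes to the closed ideals generated by `p` and `q` because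
the annihilator ideals `{x | x A q = 0}` and `{y | x A y = 0}` are closed.
-/

open Finset Metric

lemma eq_zero_of_forall_four_mul_add_one_mul_le {s t : ℝ} (hs : s < 4) (ht : 0 ≤ t)
    (h : ∀ n : ℕ, (4 * n + 1) * t ≤ s * ((n + 1) * t)) : t = 0 := by
  obtain ⟨n, hn⟩ := exists_nat_gt ((s - 1) / (4 - s))
  rw [div_lt_iff₀ (by linarith)] at hn
  nlinarith [h n]

section StarRing

variable {R : Type*} [NonUnitalNonAssocSemiring R] [StarRing R]

lemma star_mul_eq_ite_of_star_succ_mul_succ {z : ℕ → R}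
    (hstep : ∀ j k, star (z (j + 1)) * z (k + 1) = star (z j) * z k)
    (hzero : ∀ j, star (z (j + 1)) * z 0 = 0) (j k : ℕ) :
    star (z j) * z k = if j = k then star (z 0) * z 0 else 0 := by
  induction j generalizing k with
  | zero =>
    cases k with
    | zero => simp
    | succ k => simpa using congr(star $(hzero k))
  | succ j ih =>
    cases k with
    | zero => simp [hzero]
    | succ k => simp [hstep, ih]

lemma star_sum_mul_sum_of_orthogonal {ι : Type*} [DecidableEq ι] {z : ι → R} {a : R}
    (hz : ∀ j k, star (z j) * z k = if j = k then a else 0) (s t : Finset ι) :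
    star (∑ j ∈ s, z j) * ∑ k ∈ t, z k = #(s ∩ t) • a := by
  simp [star_sum, sum_mul_sum, hz, sum_ite_eq]

end StarRing

namespace TwoSidedIdeal

variable {R : Type*} [Ring R]

def leftAnnihilatorSpan (q : R) : TwoSidedIdeal R :=
  mk' {x | ∀ b, x * b * q = 0}
    (fun b ↦ by rw [zero_mul, zero_mul])
    (fun hx hy b ↦ by rw [add_mul, add_mul, hx b, hy b, add_zero])
    (fun hx b ↦ by rw [neg_mul, neg_mul, hx b, neg_zero])
    (fun hy b ↦ by rw [mul_assoc, mul_assoc, ← mul_assoc _ b, hy b, mul_zero])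
    (fun hx b ↦ by rw [mul_assoc _ _ b, hx])

def rightAnnihilatorSpan (p : R) : TwoSidedIdeal R :=
  mk' {y | ∀ b, p * b * y = 0}
    (fun b ↦ by rw [mul_zero])
    (fun hx hy b ↦ by rw [mul_add, hx b, hy b, add_zero])
    (fun hx b ↦ by rw [mul_neg, hx b, neg_zero])
    (fun hy b ↦ by rw [← mul_assoc, mul_assoc _ b, hy])
    (fun hx b ↦ by rw [← mul_assoc, hx b, zero_mul])

lemma mem_leftAnnihilatorSpan {q x : R} : x ∈ leftAnnihilatorSpan q ↔ ∀ b, x * b * q = 0 :=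
  mem_mk' ..

lemma mem_rightAnnihilatorSpan {p y : R} : y ∈ rightAnnihilatorSpan p ↔ ∀ b, p * b * y = 0 :=
  mem_mk' ..

variable [TopologicalSpace R] [IsTopologicalRing R] [T1Space R]

lemma isClosed_leftAnnihilatorSpan (q : R) : IsClosed (leftAnnihilatorSpan q : Set R) := by
  simp only [leftAnnihilatorSpan, coe_mk', Set.ofPred_forall]
  exact isClosed_iInter fun b ↦ isClosed_eq (by fun_prop) continuous_const

lemma isClosed_rightAnnihilatorSpan (p : R) : IsClosed (rightAnnihilatorSpan p : Set R) := by
  simp only [rightAnnihilatorSpan, coe_mk', Set.ofPred_forall]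
  exact isClosed_iInter fun b ↦ isClosed_eq (by fun_prop) continuous_const

end TwoSidedIdeal

section CStarAlgebra

open TwoSidedIdeal

variable {A : Type*} [CStarAlgebra A] {u v : A}

lemma closedIdealGen_subset {a : A} {I : TwoSidedIdeal A} (hI : IsClosed (I : Set A))
    (ha : a ∈ I) : closedIdealGen a ⊆ I :=
  closure_minimal (span_le.mpr (Set.singleton_subset_iff.mpr ha)) hI

lemma mul_eq_zero_of_mem_closedIdealGen {p q : A} (h : ∀ b, p * b * q = 0) {x y : A}
    (hx : x ∈ closedIdealGen p) (hy : y ∈ closedIdealGen q) : x * y = 0 := by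
  have hx' : x ∈ leftAnnihilatorSpan q :=
    closedIdealGen_subset (isClosed_leftAnnihilatorSpan q) (mem_leftAnnihilatorSpan.mpr h) hx
  have hy' : y ∈ rightAnnihilatorSpan x :=
    closedIdealGen_subset (isClosed_rightAnnihilatorSpan x)
      (mem_rightAnnihilatorSpan.mpr (mem_leftAnnihilatorSpan.mp hx')) hy
  simpa using mem_rightAnnihilatorSpan.mp hy' 1

lemma norm_sq_eq_of_star_mul_self_eq_nsmul {x y : A} {m : ℕ}
    (h : star x * x = m • (star y * y)) : ‖x‖ ^ 2 = m * ‖y‖ ^ 2 := by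
  rw [sq, sq, ← CStarRing.norm_star_mul_self, h, RCLike.norm_nsmul ℝ,
    CStarRing.norm_star_mul_self, nsmul_eq_mul]

lemma eq_zero_of_mem_extremePoints_closedBall
    (hu : u ∈ Set.extremePoints ℝ (closedBall (0 : A) 1)) {z : A} (h₁ : star u * z = 0)
    (h₂ : z * (star u * u) = 0) : z = 0 := by
  by_contra hz
  set z₁ : A := (‖z‖⁻¹ : ℝ) • z
  have hz₁ : ‖z₁‖ = 1 := norm_smul_inv_norm hz
  have h₁' : star u * z₁ = 0 := by rw [mul_smul_comm, h₁, smul_zero]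
  have h₂' : z₁ * (star u * u) = 0 := by rw [smul_mul_assoc, h₂, smul_zero]
  have h₁'' : star z₁ * u = 0 := by simpa using congr(star $h₁')
  have hortho : star u * u * (star z₁ * z₁) = 0 := by
    rw [← mul_assoc, show star u * u * star z₁ = star (z₁ * (star u * u)) by
      simp [star_mul, mul_assoc], h₂', star_zero, zero_mul]
  have hsum : ‖star u * u + star z₁ * z₁‖ ≤ 1 := by
    rw [(IsSelfAdjoint.star_mul_self u).norm_add_eq_max (.star_mul_self z₁) hortho,
      CStarRing.norm_star_mul_self, CStarRing.norm_star_mul_self, hz₁, max_le_iff]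
    have := mem_closedBall_zero_iff.mp hu.1
    constructor <;> nlinarith [norm_nonneg u]
  have hball {w : A} (hw : star w * w = star u * u + star z₁ * z₁) :
      w ∈ closedBall (0 : A) 1 := by
    rw [mem_closedBall_zero_iff, ← sq_le_one_iff₀ (norm_nonneg w), sq,
      ← CStarRing.norm_star_mul_self, hw]
    exact hsum
  have hplus : u + z₁ ∈ closedBall (0 : A) 1 := hball <| by
    simp only [star_add, add_mul, mul_add, h₁', h₁'']; abel
  have hminus : u - z₁ ∈ closedBall (0 : A) 1 := hball <| by
    simp only [star_sub, sub_mul, mul_sub, h₁', h₁'']; abel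
  have hmid : u ∈ openSegment ℝ (u + z₁) (u - z₁) :=
    ⟨1/2, 1/2, by norm_num, by norm_num, by norm_num, by module⟩
  have : z₁ = 0 := by simpa using hu.2 hplus hminus hmid
  simp [this] at hz₁

namespace IsPartialIsometry

lemma star_mul_mul_star (hu : IsPartialIsometry u) : star u * u * star u = star u := by
  simpa [star_mul, mul_assoc] using congr(star $hu)

lemma mul_one_sub_star_mul (hu : IsPartialIsometry u) : u * (1 - star u * u) = 0 := by
  rw [mul_one_sub, ← mul_assoc, hu, sub_self]

lemma star_mul_one_sub_mul_star (hu : IsPartialIsometry u) : star u * (1 - u * star u) = 0 := by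
  rw [mul_one_sub, ← mul_assoc, hu.star_mul_mul_star, sub_self]

lemma one_sub_star_mul_mul_star_mul (hu : IsPartialIsometry u) :
    (1 - star u * u) * (star u * u) = 0 := by
  rw [one_sub_mul, ← mul_assoc, hu.star_mul_mul_star, sub_self]

end IsPartialIsometry

namespace IsExtremalPartialIsometry

lemma leftDefect_mul_mul_rightDefect (hu : IsExtremalPartialIsometry u) (c : A) :
    (1 - u * star u) * c * (1 - star u * u) = 0 := by
  refine eq_zero_of_mem_extremePoints_closedBall hu.2 ?_ ?_
  · rw [← mul_assoc, ← mul_assoc, hu.1.star_mul_one_sub_mul_star, zero_mul, zero_mul]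
  · rw [mul_assoc, hu.1.one_sub_star_mul_mul_star_mul, mul_zero]

lemma rightDefect_mul_mul_leftDefect (hu : IsExtremalPartialIsometry u) (c : A) :
    (1 - star u * u) * c * (1 - u * star u) = 0 := by
  simpa [star_mul, mul_assoc] using congr(star $(hu.leftDefect_mul_mul_rightDefect (star c)))

end IsExtremalPartialIsometry

lemma eq_zero_of_norm_sub_lt_two_of_orthogonal_chain (hd : ‖u - v‖ < 2) {y : A} {z : ℕ → A}
    (hz : ∀ j k, star (z j) * z k = if j = k then star y * y else 0)
    (hu : ∀ k, star u * u * z k = z k) (hv₀ : v * z 0 = 0)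
    (hv : ∀ k, v * z (k + 1) = -(u * z k)) : y = 0 := by
  have hsum (n : ℕ) : (u - v) * ∑ k ∈ range (n + 1), z k =
      u * (∑ k ∈ range (n + 1), z k + ∑ k ∈ range n, z k) := by
    rw [sub_mul, mul_sum, mul_sum, sum_range_succ' (fun k ↦ v * z k), hv₀]
    simp [hv, mul_add, mul_sum]
  have hgram (n : ℕ) : star ((u - v) * ∑ k ∈ range (n + 1), z k) *
      ((u - v) * ∑ k ∈ range (n + 1), z k) = (4 * n + 1) • (star y * y) := by
    rw [hsum, star_mul, mul_assoc, ← mul_assoc (star u), mul_add (star u * u), mul_sum, mul_sum]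
    simp only [hu, star_add, add_mul, mul_add, star_sum_mul_sum_of_orthogonal hz,
      range_inter_range, min_self, card_range, ← add_nsmul]
    congr 1
    omega
  have hbound (n : ℕ) : (4 * n + 1) * ‖y‖ ^ 2 ≤ ‖u - v‖ ^ 2 * ((n + 1) * ‖y‖ ^ 2) := by
    have hb : ‖∑ k ∈ range (n + 1), z k‖ ^ 2 = (n + 1 : ℕ) * ‖y‖ ^ 2 :=
      norm_sq_eq_of_star_mul_self_eq_nsmul <| by
        rw [star_sum_mul_sum_of_orthogonal hz, inter_self, card_range]
    have h := norm_sq_eq_of_star_mul_self_eq_nsmul (hgram n)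
    push_cast at h hb
    rw [← h, ← hb, ← mul_pow]
    gcongr
    exact norm_mul_le _ _
  have hy := eq_zero_of_forall_four_mul_add_one_mul_le (by nlinarith [norm_nonneg (u - v)]) (by positivity) hbound
  simpa using hy

lemma eq_zero_of_norm_sub_lt_two_of_absorbing (hd : ‖u - v‖ < 2) {y : A}
    (hu : ∀ c, star u * u * (c * y) = c * y) (hv : ∀ c, v * star v * (c * y) = c * y)
    (hvy : v * y = 0) : y = 0 := by
  set z : ℕ → A := fun k ↦ (-(star v * u)) ^ k * y with hz
  have hz₀ : z 0 = y := by simp [hz]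
  have hz_succ (k : ℕ) : z (k + 1) = -(star v * (u * z k)) := by
    simp only [hz, pow_succ', mul_assoc, neg_mul]
  have huz (k : ℕ) : star u * u * z k = z k := hu _
  have hvuz (k : ℕ) : v * star v * (u * z k) = u * z k := by
    simpa only [hz, mul_assoc] using hv (u * (-(star v * u)) ^ k)
  have hstep (j k : ℕ) : star (z (j + 1)) * z (k + 1) = star (z j) * z k :=
    calc star (z (j + 1)) * z (k + 1) = star (z j) * (star u * (v * star v * (u * z k))) := by
          simp only [hz_succ, star_neg, neg_mul_neg, star_mul, star_star, mul_assoc]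
      _ = star (z j) * z k := by rw [hvuz, ← mul_assoc (star u), huz]
  have hzero (j : ℕ) : star (z (j + 1)) * z 0 = 0 := by
    simp only [hz_succ, hz₀, star_neg, neg_mul, star_mul, star_star, mul_assoc, hvy, mul_zero,
      neg_zero]
  refine eq_zero_of_norm_sub_lt_two_of_orthogonal_chain hd
    (hz₀ ▸ star_mul_eq_ite_of_star_succ_mul_succ hstep hzero) huz (hz₀ ▸ hvy) fun k ↦ ?_
  rw [hz_succ, mul_neg, ← mul_assoc, hvuz]

lemma leftDefect_mul_mul_rightDefect_eq_zero_of_norm_sub_lt_two (hu : IsExtremalPartialIsometry u)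
    (hv : IsExtremalPartialIsometry v) (hd : ‖u - v‖ < 2) (a : A) :
    (1 - u * star u) * a * (1 - star v * v) = 0 := by
  set y := (1 - star v * v) * star a * (1 - u * star u) with hy
  suffices y = 0 by simpa [y, star_mul, mul_assoc] using congr(star $this)
  refine eq_zero_of_norm_sub_lt_two_of_absorbing hd (fun c ↦ ?_) (fun c ↦ ?_) ?_
  · have h := hu.rightDefect_mul_mul_leftDefect (c * ((1 - star v * v) * star a))
    rw [one_sub_mul, sub_mul, sub_eq_zero] at h
    simpa only [y, mul_assoc] using h.symm
  · have h := congr($(hv.leftDefect_mul_mul_rightDefect c) * (star a * (1 - u * star u)))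
    rw [one_sub_mul, sub_mul, sub_mul, zero_mul, sub_eq_zero] at h
    simpa only [y, mul_assoc] using h.symm
  · rw [hy, ← mul_assoc, ← mul_assoc, hv.1.mul_one_sub_star_mul, zero_mul, zero_mul]

end CStarAlgebra

/-- If `u` and `v` are extremal partial isometries in a unital C*-algebra with
`‖u − v‖ < 2`, `I₁` is the closed ideal generated by the left defect projection
`1 − uu*` of `u`, `J₁` the closed ideal generated by `1 − u*u`, and similarly
`I₂`, `J₂` for `v`, then `I₁·J₂ = {0}` and `I₂·J₁ = {0}`. -/
theorem defectIdeals_mul_eq_zero_of_norm_sub_lt_two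
    {A : Type*} [CStarAlgebra A] (u v : A)
    (hu : IsExtremalPartialIsometry u) (hv : IsExtremalPartialIsometry v)
    (hd : ‖u - v‖ < 2) :
    (∀ x ∈ closedIdealGen (1 - u * star u), ∀ y ∈ closedIdealGen (1 - star v * v),
      x * y = 0) ∧
    (∀ x ∈ closedIdealGen (1 - v * star v), ∀ y ∈ closedIdealGen (1 - star u * u),
      x * y = 0) :=
  ⟨fun _ hx _ hy ↦ mul_eq_zero_of_mem_closedIdealGen
      (leftDefect_mul_mul_rightDefect_eq_zero_of_norm_sub_lt_two hu hv hd) hx hy,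
    fun _ hx _ hy ↦ mul_eq_zero_of_mem_closedIdealGen
      (leftDefect_mul_mul_rightDefect_eq_zero_of_norm_sub_lt_two hv hu
        (norm_sub_rev u v ▸ hd)) hx hy⟩
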